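/- arXiv:2602.10376 — 3 statements merged into one kernel-verified Lean document; each statement's English description precedes it below -/
import Mathlib

section
/- Let G be a finite simple graph on vertex set {1,…,n} with n ≥ 2 and at least one edge, and let α = α(G). Define the polynomial h_J(t) = ∑_{k=0}^{n−α−1} (k+1) t^k + ∑_{s=−1}^{α−3} E_{s+3} t^{n−s−3} ∈ ℤ[t], where E_{s+3} = (n−s−2) − ∑_{j=s+3}^{α} C(j−2, s+1)(−1)^{j−s−1} g_j(G). Then deg h_J(t) = n − 2 − M(G). -/
attribute [local instance] Classical.propDecidable

/-- `s` is an independent set of vertices of `G`. -/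
def IsIndep {V : Type*} (G : SimpleGraph V) (s : Finset V) : Prop :=
  ∀ v ∈ s, ∀ w ∈ s, ¬ G.Adj v w

/-- The independence polynomial `P_G(x) = ∑ g_i x^i`. -/
noncomputable def indepPoly {V : Type*} [Fintype V] (G : SimpleGraph V) : Polynomial ℤ :=
  ∑ s ∈ Finset.univ.filter (fun s : Finset V => IsIndep G s), Polynomial.X ^ s.card

/-- `g_i(G)`: the number of independent sets of `G` of cardinality `i`. -/
noncomputable def gCount {V : Type*} [Fintype V] (G : SimpleGraph V) (i : ℕ) : ℕ :=
  (Finset.univ.filter (fun s : Finset V => IsIndep G s ∧ s.card = i)).card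

/-- The independence number `α(G)`. -/
noncomputable def indepNum {V : Type*} [Fintype V] (G : SimpleGraph V) : ℕ :=
  (Finset.univ.filter (fun s : Finset V => IsIndep G s)).sup Finset.card

/-- `M(G)`: the multiplicity of `x = -1` as a root of `P_G(x)`. -/
noncomputable def multM {V : Type*} [Fintype V] (G : SimpleGraph V) : ℕ :=
  (indepPoly G).rootMultiplicity (-1)

open Polynomial Finset

lemma coeff_indepPoly {V : Type*} [Fintype V] (G : SimpleGraph V) (d : ℕ) :
    (indepPoly G).coeff d = (gCount G d : ℤ) := by
  classical
  rw [indepPoly, Polynomial.finset_sum_coeff]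
  simp only [Polynomial.coeff_X_pow]
  rw [Finset.sum_boole, gCount, Finset.filter_filter]
  norm_num
  congr 1
  apply Finset.filter_congr
  intro s _
  simp [eq_comm]

lemma gCount_zero {V : Type*} [Fintype V] (G : SimpleGraph V) : gCount G 0 = 1 := by
  classical
  rw [gCount]
  rw [show (Finset.univ.filter (fun s : Finset V => IsIndep G s ∧ s.card = 0)) = {∅} from ?_]
  · simp
  · ext s
    simp only [Finset.mem_filter, Finset.mem_univ, true_and, Finset.mem_singleton,
      Finset.card_eq_zero]
    constructor
    · rintro ⟨-, h⟩; exact h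
    · rintro rfl; exact ⟨fun v hv => absurd hv (by simp), rfl⟩

lemma gCount_one {V : Type*} [Fintype V] (G : SimpleGraph V) :
    gCount G 1 = Fintype.card V := by
  classical
  rw [gCount]
  rw [show (Finset.univ.filter (fun s : Finset V => IsIndep G s ∧ s.card = 1))
      = Finset.powersetCard 1 Finset.univ from ?_]
  · simp [Finset.card_powersetCard]
  · ext s
    simp only [Finset.mem_filter, Finset.mem_univ, true_and,
      Finset.powersetCard_eq_filter, Finset.mem_powerset, Finset.powerset_univ]
    constructor
    · rintro ⟨-, h⟩; exact h
    · intro h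
      obtain ⟨v, rfl⟩ := Finset.card_eq_one.mp h
      refine ⟨?_, h⟩
      intro a ha b hb
      simp only [Finset.mem_singleton] at ha hb
      subst ha; subst hb; exact G.irrefl

lemma natDegree_indepPoly {V : Type*} [Fintype V] (G : SimpleGraph V) :
    (indepPoly G).natDegree = indepNum G := by
  classical
  apply le_antisymm
  · rw [Polynomial.natDegree_le_iff_coeff_eq_zero]
    intro N hN
    rw [coeff_indepPoly]
    norm_cast
    rw [gCount, Finset.card_eq_zero, Finset.filter_eq_empty_iff]
    rintro s - ⟨hi, hc⟩
    have : s.card ≤ indepNum G := Finset.le_sup (f := Finset.card) (by simp [hi])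
    omega
  · apply Polynomial.le_natDegree_of_ne_zero
    rw [coeff_indepPoly]
    norm_cast
    rw [gCount]
    have hne : (Finset.univ.filter (fun s : Finset V => IsIndep G s)).Nonempty :=
      ⟨∅, by simp; intro v hv; exact absurd hv (by simp)⟩
    obtain ⟨s, hs, hsup⟩ := Finset.exists_mem_eq_sup _ hne Finset.card
    simp only [Finset.mem_filter] at hs
    have : s ∈ Finset.univ.filter (fun t : Finset V => IsIndep G t ∧ t.card = indepNum G) := by
      exact Finset.mem_filter.mpr ⟨Finset.mem_univ _, hs.2, hsup.symm⟩
    intro h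
    rw [Finset.card_eq_zero] at h
    simp [h] at this

lemma indepPoly_ne_zero {V : Type*} [Fintype V] (G : SimpleGraph V) :
    indepPoly G ≠ 0 := by
  intro h
  have := coeff_indepPoly G 0
  rw [h, gCount_zero] at this
  simp at this

private lemma altsum (j m : ℕ) :
    ∑ i ∈ range (m+1), ((j+1).choose i : ℤ) * (-1)^i = (-1)^m * (j.choose m) := by
  induction m with
  | zero => simp
  | succ m ih =>
    rw [Finset.sum_range_succ, ih, Nat.choose_succ_succ' j m]
    push_cast
    ring

noncomputable def Tsum (j m : ℕ) : ℤ :=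
  ∑ i ∈ range (m+1), ((m:ℤ)+1-i) * (j.choose i) * (-1)^i

private lemma Tsum_succ (j m : ℕ) :
    Tsum j (m+1) = Tsum j m + ∑ i ∈ range (m+2), ((j.choose i : ℤ)) * (-1)^i := by
  have h1 : Tsum j m = ∑ i ∈ range (m+2), ((m:ℤ)+1-i) * (j.choose i) * (-1)^i := by
    rw [Finset.sum_range_succ]
    simp [Tsum]
  rw [h1, Tsum, ← Finset.sum_add_distrib]
  apply Finset.sum_congr rfl
  intro i _
  push_cast
  ring

private lemma Tsum_j0 (m : ℕ) : Tsum 0 m = (m:ℤ)+1 := by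
  rw [Tsum, Finset.sum_eq_single 0]
  · simp
  · intro i _ hi
    obtain ⟨i', rfl⟩ : ∃ i', i = i' + 1 := ⟨i-1, by omega⟩
    simp
  · simp

private lemma Tsum_j1 (m : ℕ) : Tsum 1 m = 1 := by
  induction m with
  | zero => simp [Tsum]
  | succ m ih =>
    rw [Tsum_succ, ih]
    have := altsum 0 (m+1)
    rw [this]
    simp [Nat.choose_eq_zero_of_lt (by omega : 0 < m+1)]

private lemma Tsum_j2 (j m : ℕ) : Tsum (j+2) m = (-1)^m * (j.choose m : ℤ) := by
  induction m with
  | zero => simp [Tsum]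
  | succ m ih =>
    rw [Tsum_succ, ih, altsum (j+1) (m+1), Nat.choose_succ_succ' j m]
    push_cast
    ring

private lemma sign_helper (j i : ℕ) (h : i ≤ j) : ((-1:ℤ))^(j-i) = (-1)^j * (-1)^i := by
  nth_rewrite 2 [← Nat.sub_add_cancel h]
  rw [pow_add, mul_assoc, ← pow_add]
  simp [← two_mul, pow_mul]

private lemma choose_sign (j i : ℕ) :
    (j.choose i : ℤ) * (-1)^(j-i) = (j.choose i : ℤ) * ((-1)^j * (-1)^i) := by
  rcases le_or_gt i j with h | h
  · rw [sign_helper j i h]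
  · simp [Nat.choose_eq_zero_of_lt h]

private lemma E_eq (α : ℕ) (g : ℕ → ℤ) (hg0 : g 0 = 1) (nZ : ℤ) (hg1 : g 1 = nZ)
    (k : ℕ) (hk2 : 2 ≤ k) (hkα : k ≤ α) :
    (nZ - k + 1) - ∑ j ∈ Finset.Icc k α, ((j-2).choose (k-2) : ℤ) * (-1)^(j-k) * g j
    = -∑ i ∈ Finset.range (k-1),
        ((k:ℤ)-1-i) * (∑ j ∈ Finset.range (α+1), g j * (-1)^(j-i) * (j.choose i)) := by
  obtain ⟨m, rfl⟩ : ∃ m, k = m + 2 := ⟨k-2, by omega⟩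
  have hswap : ∑ i ∈ Finset.range (m+1),
      ((m:ℤ)+2-1-i) * (∑ j ∈ Finset.range (α+1), g j * (-1)^(j-i) * (j.choose i))
      = ∑ j ∈ Finset.range (α+1), g j * (-1)^j * Tsum j m := by
    simp only [Finset.mul_sum]
    rw [Finset.sum_comm]
    apply Finset.sum_congr rfl
    intro j _
    rw [Tsum, Finset.mul_sum]
    apply Finset.sum_congr rfl
    intro i _
    have := choose_sign j i
    push_cast at this ⊢
    linear_combination (((m:ℤ)+1-(i:ℤ)) * g j) * this
  simp only [Nat.add_sub_cancel]
  push_cast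
  rw [hswap]
  have hsplit : Finset.range (α+1) = insert 0 (insert 1 (Finset.Icc 2 α)) := by
    ext x
    simp only [Finset.mem_range, Finset.mem_insert, Finset.mem_Icc]
    omega
  rw [hsplit, Finset.sum_insert (by simp), Finset.sum_insert (by simp)]
  rw [hg0, hg1, Tsum_j0, Tsum_j1]
  have hterm : ∑ j ∈ Finset.Icc 2 α, g j * (-1)^j * Tsum j m
      = ∑ j ∈ Finset.Icc 2 α, ((j-2).choose m : ℤ) * (-1)^(j-(m+2)) * g j := by
    apply Finset.sum_congr rfl
    intro j hj
    simp only [Finset.mem_Icc] at hj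
    obtain ⟨j', rfl⟩ : ∃ j', j = j' + 2 := ⟨j-2, by omega⟩
    rw [Tsum_j2]
    simp only [Nat.add_sub_cancel]
    rcases le_or_gt (m+2) (j'+2) with h | h
    · rw [sign_helper (j'+2) (m+2) h, pow_add]
      ring
    · rw [Nat.choose_eq_zero_of_lt (by omega : j' < m)]
      simp
  rw [hterm]
  have hsub : ∑ j ∈ Finset.Icc (m+2) α, ((j-2).choose m : ℤ) * (-1)^(j-(m+2)) * g j
      = ∑ j ∈ Finset.Icc 2 α, ((j-2).choose m : ℤ) * (-1)^(j-(m+2)) * g j := by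
    apply Finset.sum_subset
    · apply Finset.Icc_subset_Icc_left (by omega)
    · intro j hj hj'
      simp only [Finset.mem_Icc] at hj hj'
      rw [Nat.choose_eq_zero_of_lt (by omega : j - 2 < m)]
      simp
  rw [← hsub]
  push_cast
  ring

lemma coeff_shape (n a : ℕ) (E : ℕ → ℤ) (d : ℕ) :
    ((∑ k ∈ Finset.range (n - a), Polynomial.C ((k:ℤ)+1) * Polynomial.X ^ k)
      + ∑ k ∈ Finset.Icc 2 a, Polynomial.C (E k) * Polynomial.X ^ (n-k)).coeff d
    = (if d < n - a then (d:ℤ)+1 else 0)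
      + ∑ k ∈ Finset.Icc 2 a, (if d = n - k then E k else 0) := by
  rw [Polynomial.coeff_add]
  congr 1
  · rw [Polynomial.finset_sum_coeff]
    simp only [Polynomial.coeff_C_mul, Polynomial.coeff_X_pow, mul_ite, mul_one, mul_zero]
    rw [Finset.sum_ite_eq]
    simp [Finset.mem_range]
  · rw [Polynomial.finset_sum_coeff]
    apply Finset.sum_congr rfl
    intro k _
    simp only [Polynomial.coeff_C_mul, Polynomial.coeff_X_pow, mul_ite, mul_one, mul_zero]

lemma taylor_coeff_sum (P : Polynomial ℤ) (i : ℕ) :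
    (Polynomial.taylor (-1) P).coeff i
      = ∑ j ∈ Finset.range (P.natDegree + 1),
          (P.coeff j) * (-1 : ℤ) ^ (j - i) * (j.choose i) := by
  conv_lhs => rw [Polynomial.as_sum_range P]
  rw [map_sum, Polynomial.finset_sum_coeff]
  apply Finset.sum_congr rfl
  intro j _
  rw [Polynomial.taylor_monomial, Polynomial.coeff_C_mul, Polynomial.coeff_X_add_C_pow]
  ring

lemma taylor_factor (P : Polynomial ℤ) :
    Polynomial.taylor (-1) P
      = Polynomial.X ^ (P.rootMultiplicity (-1))
          * Polynomial.taylor (-1) (P /ₘ (X - C (-1)) ^ (P.rootMultiplicity (-1))) := by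
  set M := P.rootMultiplicity (-1)
  set Q := P /ₘ (X - C (-1)) ^ M with hQ
  have hfact : (X - C (-1)) ^ M * Q = P :=
    Polynomial.pow_mul_divByMonic_rootMultiplicity_eq P (-1)
  rw [← hfact, Polynomial.taylor_mul]
  congr 1
  rw [Polynomial.taylor_apply, Polynomial.pow_comp, Polynomial.sub_comp,
    Polynomial.X_comp, Polynomial.C_comp]
  ring

lemma taylor_coeff_lt (P : Polynomial ℤ) (i : ℕ) (hi : i < P.rootMultiplicity (-1)) :
    (Polynomial.taylor (-1) P).coeff i = 0 := by
  rw [taylor_factor, mul_comm, Polynomial.coeff_mul_X_pow']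
  simp [Nat.not_le.mpr hi]

lemma taylor_coeff_root_mult (P : Polynomial ℤ) (hP : P ≠ 0) :
    (Polynomial.taylor (-1) P).coeff (P.rootMultiplicity (-1)) ≠ 0 := by
  rw [taylor_factor, mul_comm, Polynomial.coeff_mul_X_pow']
  simp only [le_refl, if_true, Nat.sub_self]
  rw [Polynomial.taylor_coeff_zero]
  exact Polynomial.eval_divByMonic_pow_rootMultiplicity_ne_zero (-1) hP

/-- For the `h`-polynomial of the cover ideal,
`h_J(t) = ∑_{k=0}^{n-α-1} (k+1) t^k + ∑_{s=-1}^{α-3} E_{s+3} t^{n-s-3}` with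
`E_{s+3} = (n-s-2) - ∑_{j=s+3}^{α} C(j-2, s+1)(-1)^{j-s-1} g_j(G)`, one has
`deg h_J = n - 2 - M(G)`.  (The second sum is re-indexed by `k = s+3`, `2 ≤ k ≤ α`.) -/
theorem natDegree_h_poly_cover (n : ℕ) (G : SimpleGraph (Fin n)) (hn : 2 ≤ n)
    (hedge : ∃ u w : Fin n, G.Adj u w) :
    ((∑ k ∈ Finset.range (n - indepNum G),
          Polynomial.C ((k : ℤ) + 1) * Polynomial.X ^ k)
        + ∑ k ∈ Finset.Icc 2 (indepNum G),
            Polynomial.C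
              (((n : ℤ) - k + 1)
                - ∑ j ∈ Finset.Icc k (indepNum G),
                    ((j - 2).choose (k - 2) : ℤ) * (-1) ^ (j - k) * (gCount G j : ℤ))
              * Polynomial.X ^ (n - k)).natDegree
      = n - 2 - multM G := by
  classical
  obtain ⟨u, w, huw⟩ := hedge
  set α := indepNum G with hαdef
  set P := indepPoly G with hPdef
  set M := multM G with hMdef
  have hMP : M = P.rootMultiplicity (-1) := rfl
  have hPne : P ≠ 0 := indepPoly_ne_zero G
  have hdeg : P.natDegree = α := natDegree_indepPoly G
  have hg1 : gCount G 1 = n := by rw [gCount_one]; simp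
  have hg0 : gCount G 0 = 1 := gCount_zero G
  have hα1 : 1 ≤ α := by
    have hv : IsIndep G {u} := by
      intro a ha b hb
      simp only [Finset.mem_singleton] at ha hb
      subst ha; subst hb; exact G.irrefl
    have : ({u} : Finset (Fin n)).card ≤ α :=
      Finset.le_sup (f := Finset.card) (by simp [hv])
    simpa using this
  have hαn : α < n := by
    have hsup : α ≤ n - 1 := by
      apply Finset.sup_le
      intro s hs
      simp only [Finset.mem_filter, Finset.mem_univ, true_and] at hs
      by_contra hc
      push_neg at hc
      have hle : s.card ≤ n := by
        have := s.card_le_univ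
        simpa using this
      have hcard : s.card = Fintype.card (Fin n) := by simp; omega
      have hu : s = Finset.univ := Finset.eq_univ_of_card s hcard
      exact hs u (by simp [hu]) w (by simp [hu]) huw
    omega
  -- M < α
  have hfact : (X - C (-1 : ℤ)) ^ M * (P /ₘ (X - C (-1)) ^ M) = P := by
    rw [hMP]
    exact Polynomial.pow_mul_divByMonic_rootMultiplicity_eq P (-1)
  have hMα : M < α := by
    set Q := P /ₘ (X - C (-1 : ℤ)) ^ M with hQdef
    have hQne : Q ≠ 0 := fun h => hPne (by rw [← hfact, h, mul_zero])
    have hXne : ((X : Polynomial ℤ) - C (-1)) ^ M ≠ 0 :=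
      pow_ne_zero _ (Polynomial.X_sub_C_ne_zero (-1))
    have hdm : M + Q.natDegree = α := by
      rw [← hdeg, ← hfact, Polynomial.natDegree_mul hXne hQne, Polynomial.natDegree_pow,
        Polynomial.natDegree_X_sub_C, mul_one]
    rcases Nat.lt_or_ge M α with h | h
    · exact h
    · exfalso
      have hMeq : M = α := by omega
      have hQ0 : Q.natDegree = 0 := by omega
      have hQC : Q = C (Q.coeff 0) := Polynomial.eq_C_of_natDegree_eq_zero hQ0
      have hX1 : (X : Polynomial ℤ) - C (-1) = X + C 1 := by
        simp [sub_neg_eq_add]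
      have h0 : P.coeff 0 = 1 := by rw [hPdef, coeff_indepPoly, hg0]; norm_num
      have h1 : P.coeff 1 = n := by rw [hPdef, coeff_indepPoly, hg1]
      have e0 : P.coeff 0 = Q.coeff 0 := by
        conv_lhs => rw [← hfact, hQC, hX1]
        rw [mul_comm, Polynomial.coeff_C_mul, Polynomial.coeff_X_add_C_pow]
        simp
      have e1 : P.coeff 1 = Q.coeff 0 * α := by
        conv_lhs => rw [← hfact, hQC, hX1]
        rw [mul_comm, Polynomial.coeff_C_mul, Polynomial.coeff_X_add_C_pow]
        simp [hMeq]
      rw [h0] at e0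
      rw [h1, ← e0, one_mul] at e1
      omega
  -- Taylor coefficients
  set c : ℕ → ℤ := fun i => (Polynomial.taylor (-1) P).coeff i with hcdef
  have hcsum : ∀ i, c i
      = ∑ j ∈ Finset.range (α+1), (gCount G j : ℤ) * (-1)^(j-i) * (j.choose i) := by
    intro i
    rw [hcdef]
    simp only
    rw [taylor_coeff_sum, hdeg]
    apply Finset.sum_congr rfl
    intro j _
    rw [hPdef, coeff_indepPoly]
  have hclt : ∀ i, i < M → c i = 0 := by
    intro i hi
    exact taylor_coeff_lt P i (by rw [← hMP]; exact hi)
  have hcM : c M ≠ 0 := by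
    rw [hcdef]
    simp only
    rw [hMP]
    exact taylor_coeff_root_mult P hPne
  -- key identity
  have hE : ∀ k, 2 ≤ k → k ≤ α →
      ((n:ℤ) - k + 1) - ∑ j ∈ Finset.Icc k α,
          ((j-2).choose (k-2) : ℤ) * (-1)^(j-k) * (gCount G j : ℤ)
      = -∑ i ∈ Finset.range (k-1), ((k:ℤ)-1-i) * c i := by
    intro k h2 h3
    rw [E_eq α (fun j => (gCount G j : ℤ)) (by show ((gCount G 0 : ℕ) : ℤ) = 1; exact_mod_cast hg0) (n:ℤ)
      (by show ((gCount G 1 : ℕ) : ℤ) = (n:ℤ); exact_mod_cast hg1) k h2 h3]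
    congr 1
    apply Finset.sum_congr rfl
    intro i _
    rw [hcsum i]
  -- coefficient formula for the h-polynomial
  have hco : ∀ d, ((∑ k ∈ Finset.range (n - α), Polynomial.C ((k:ℤ)+1) * Polynomial.X ^ k)
      + ∑ k ∈ Finset.Icc 2 α,
          Polynomial.C
            (((n : ℤ) - k + 1)
              - ∑ j ∈ Finset.Icc k α,
                  ((j - 2).choose (k - 2) : ℤ) * (-1) ^ (j - k) * (gCount G j : ℤ))
            * Polynomial.X ^ (n - k)).coeff d
      = (if d < n - α then (d:ℤ)+1 else 0)
        + ∑ k ∈ Finset.Icc 2 α, (if d = n - k then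
            (((n : ℤ) - k + 1)
              - ∑ j ∈ Finset.Icc k α,
                  ((j - 2).choose (k - 2) : ℤ) * (-1) ^ (j - k) * (gCount G j : ℤ)) else 0) :=
    fun d => coeff_shape n α _ d
  apply le_antisymm
  · rw [Polynomial.natDegree_le_iff_coeff_eq_zero]
    intro N hN
    rw [hco N, if_neg (by omega), zero_add]
    apply Finset.sum_eq_zero
    intro k hk
    simp only [Finset.mem_Icc] at hk
    split_ifs with h
    · rw [hE k hk.1 hk.2, neg_eq_zero]
      apply Finset.sum_eq_zero
      intro i hi
      simp only [Finset.mem_range] at hi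
      rw [hclt i (by omega)]
      ring
    · rfl
  · apply Polynomial.le_natDegree_of_ne_zero
    rw [hco (n - 2 - M)]
    by_cases hc2 : M + 2 ≤ α
    · rw [if_neg (by omega), zero_add, Finset.sum_eq_single (M+2)]
      · rw [if_pos (by omega), hE (M+2) (by omega) hc2]
        have hsum : ∑ i ∈ Finset.range (M+2-1), (((M+2 : ℕ):ℤ)-1-i) * c i = c M := by
          have h21 : M + 2 - 1 = M + 1 := rfl
          rw [h21, Finset.sum_range_succ]
          have hz : ∑ i ∈ Finset.range M, (((M+2 : ℕ):ℤ)-1-i) * c i = 0 :=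
            Finset.sum_eq_zero (fun i hi => by
              rw [hclt i (Finset.mem_range.mp hi)]; ring)
          rw [hz, zero_add]
          push_cast
          ring
        rw [hsum]
        simpa using hcM
      · intro k hk hne
        simp only [Finset.mem_Icc] at hk
        rw [if_neg (by omega)]
      · intro habs
        exact absurd (Finset.mem_Icc.mpr ⟨by omega, hc2⟩) habs
    · rw [if_pos (by omega)]
      rw [Finset.sum_eq_zero (fun k hk => by
        simp only [Finset.mem_Icc] at hk
        rw [if_neg (by omega)]), add_zero]
      intro h
      omega
end

section
/- Fix integers L1 ≥ 0 and m ≥ 0 with L1 + m ≥ 1, and integers t_1,…,t_m ≥ 1, and let T be the tree with a center c, leaves ℓ_1,…,ℓ_{L1} each adjacent only to c, vertices v_1,…,v_m each adjacent to c, and for each 1 ≤ i ≤ m, leaves w_{i,1},…,w_{i,t_i} each adjacent only to v_i, with no other edges. Set L2 = t_1 + ⋯ + t_m. Then M(T) equals: 0 if L2 = 0; 0 if L2 > 0 and L1 = 0; min(L1, L2) if L1 > 0, L2 > 0 and L1 ≠ L2; L1 if L1 = L2 > 0 and m is odd; and L1 + 1 if L1 = L2 > 0 and m is even. -/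
attribute [local instance] Classical.propDecidable

open Polynomial Finset

/-- Vertices of the radius-2 tree: the center `c`, the leaves `ℓ_1,…,ℓ_{L1}` adjacent to `c`,
the branch vertices `v_1,…,v_m` adjacent to `c`, and for each `i` the leaves
`w_{i,1},…,w_{i,t_i}` adjacent to `v_i`. -/
abbrev TVert (L1 m : ℕ) (t : Fin m → ℕ) : Type :=
  Unit ⊕ Fin L1 ⊕ Fin m ⊕ (Σ i : Fin m, Fin (t i))

/-- The defining relation of the radius-2 tree: `c` is joined to each `ℓ_j` and each `v_i`,
and `v_i` is joined to each `w_{i,k}`; there are no other edges. -/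
def TRel (L1 m : ℕ) (t : Fin m → ℕ) : TVert L1 m t → TVert L1 m t → Prop
  | Sum.inl _, Sum.inr (Sum.inl _) => True
  | Sum.inl _, Sum.inr (Sum.inr (Sum.inl _)) => True
  | Sum.inr (Sum.inr (Sum.inl i)), Sum.inr (Sum.inr (Sum.inr ⟨j, _⟩)) => i = j
  | _, _ => False

/-- The radius-2 tree with parameters `L1`, `m`, `t`. -/
noncomputable def radTree (L1 m : ℕ) (t : Fin m → ℕ) : SimpleGraph (TVert L1 m t) :=
  SimpleGraph.fromRel (TRel L1 m t)

variable {L1 m : ℕ} {t : Fin m → ℕ}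

lemma isIndep_iff (s : Finset (TVert L1 m t)) :
    IsIndep (radTree L1 m t) s ↔
      ((Sum.inl () : TVert L1 m t) ∈ s →
        (∀ j : Fin L1, (Sum.inr (Sum.inl j) : TVert L1 m t) ∉ s) ∧
        (∀ i : Fin m, (Sum.inr (Sum.inr (Sum.inl i)) : TVert L1 m t) ∉ s)) ∧
      (∀ (i : Fin m) (k : Fin (t i)), (Sum.inr (Sum.inr (Sum.inl i)) : TVert L1 m t) ∈ s →
        (Sum.inr (Sum.inr (Sum.inr ⟨i, k⟩)) : TVert L1 m t) ∉ s) := by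
  constructor
  · intro h
    refine ⟨fun hc => ⟨fun j hj => ?_, fun i hi => ?_⟩, fun i k hv hw => ?_⟩
    · exact h _ hc _ hj (by simp [radTree, SimpleGraph.fromRel_adj, TRel])
    · exact h _ hc _ hi (by simp [radTree, SimpleGraph.fromRel_adj, TRel])
    · exact h _ hv _ hw (by simp [radTree, SimpleGraph.fromRel_adj, TRel])
  · rintro ⟨h1, h2⟩ x hx y hy hadj
    rw [radTree, SimpleGraph.fromRel_adj] at hadj
    obtain ⟨hne, hr | hr⟩ := hadj <;>
      rcases x with _ | j | i | ⟨i, k⟩ <;> rcases y with _ | j' | i' | ⟨i', k'⟩ <;>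
      simp only [TRel] at hr <;> first
      | exact hr
      | (exact (h1 hx).1 _ hy)
      | (exact (h1 hx).2 _ hy)
      | (exact (h1 hy).1 _ hx)
      | (exact (h1 hy).2 _ hx)
      | (subst hr; exact h2 _ _ hx hy)
      | (subst hr; exact h2 _ _ hy hx)

lemma sum_pow_card {α : Type*} [Fintype α] :
    ∑ s : Finset α, (X : Polynomial ℤ) ^ s.card = (X + 1) ^ Fintype.card α := by
  have := Finset.prod_add (fun _ : α => (X : Polynomial ℤ)) (fun _ => 1) univ
  simp only [prod_const, one_pow, mul_one, powerset_univ] at this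
  rw [← Finset.card_univ, this]

lemma prod_ite_all {ι M : Type*} [Fintype ι] [CommMonoidWithZero M] (P : ι → Prop)
    [DecidablePred P] (f : ι → M) :
    (∏ i : ι, if P i then f i else 0) = if (∀ i, P i) then ∏ i, f i else 0 := by
  by_cases h : ∀ i, P i
  · rw [if_pos h]
    exact Finset.prod_congr rfl fun i _ => by rw [if_pos (h i)]
  · push_neg at h
    obtain ⟨i, hi⟩ := h
    rw [if_neg (by push_neg; exact ⟨i, hi⟩)]
    exact Finset.prod_eq_zero (mem_univ i) (by simp [hi])

/-- The four-component description of a subset of the vertex set. -/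
noncomputable def quadEquiv (L1 m : ℕ) (t : Fin m → ℕ) :
    (Bool × Finset (Fin L1) × Finset (Fin m) × (∀ i, Finset (Fin (t i)))) ≃
      Finset (TVert L1 m t) where
  toFun q := (if q.1 then {()} else (∅ : Finset Unit)).disjSum
      (q.2.1.disjSum (q.2.2.1.disjSum (univ.sigma q.2.2.2)))
  invFun s := (decide ((Sum.inl () : TVert L1 m t) ∈ s),
      univ.filter fun j => (Sum.inr (Sum.inl j) : TVert L1 m t) ∈ s,
      univ.filter fun i => (Sum.inr (Sum.inr (Sum.inl i)) : TVert L1 m t) ∈ s,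
      fun i => univ.filter fun k => (Sum.inr (Sum.inr (Sum.inr ⟨i, k⟩)) : TVert L1 m t) ∈ s)
  left_inv := by
    rintro ⟨b, a, c, h⟩
    refine Prod.ext ?_ (Prod.ext ?_ (Prod.ext ?_ ?_))
    · cases b <;> simp
    · ext j; simp
    · ext i; simp
    · funext i; ext k; simp
  right_inv s := by
    ext x
    rcases x with ⟨⟩ | j | i | ⟨i, k⟩
    · by_cases hx : (Sum.inl () : TVert L1 m t) ∈ s <;> simp [hx]
    · by_cases hx : (Sum.inr (Sum.inl j) : TVert L1 m t) ∈ s <;> simp [hx]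
    · by_cases hx : (Sum.inr (Sum.inr (Sum.inl i)) : TVert L1 m t) ∈ s <;> simp [hx]
    · by_cases hx : (Sum.inr (Sum.inr (Sum.inr ⟨i, k⟩)) : TVert L1 m t) ∈ s <;> simp [hx]

lemma card_quad (b : Bool) (a : Finset (Fin L1)) (c : Finset (Fin m))
    (h : ∀ i, Finset (Fin (t i))) :
    (quadEquiv L1 m t (b, a, c, h)).card =
      (if b then 1 else 0) + a.card + c.card + ∑ i, (h i).card := by
  simp only [quadEquiv, Equiv.coe_fn_mk, card_disjSum, Finset.card_sigma]
  cases b <;> simp [add_assoc]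

lemma indep_quad (b : Bool) (a : Finset (Fin L1)) (c : Finset (Fin m))
    (h : ∀ i, Finset (Fin (t i))) :
    IsIndep (radTree L1 m t) (quadEquiv L1 m t (b, a, c, h)) ↔
      ((b = true → a = ∅ ∧ c = ∅) ∧ ∀ i ∈ c, h i = ∅) := by
  rw [isIndep_iff]
  simp only [quadEquiv, Equiv.coe_fn_mk, Finset.inl_mem_disjSum, Finset.inr_mem_disjSum,
    Finset.mem_sigma, Finset.mem_univ, true_and]
  constructor
  · rintro ⟨hc, hw⟩
    refine ⟨fun hb => ?_, fun i hi => ?_⟩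
    · subst hb
      have := hc (by simp)
      exact ⟨Finset.eq_empty_iff_forall_notMem.2 this.1,
        Finset.eq_empty_iff_forall_notMem.2 this.2⟩
    · exact Finset.eq_empty_iff_forall_notMem.2 fun k hk => hw i k hi hk
  · rintro ⟨hb, hw⟩
    constructor
    · intro hu
      have hb' : b = true := by cases b <;> simp_all
      obtain ⟨ha, hc⟩ := hb hb'
      subst ha; subst hc
      simp
    · intro i k hi hk
      have := hw i hi
      rw [this] at hk
      simp at hk

lemma indepPoly_radTree :
    indepPoly (radTree L1 m t) =
      X * (X + 1) ^ (∑ i, t i) + (X + 1) ^ L1 * ∏ i, ((X + 1) ^ t i + X) := by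
  have hfilter : indepPoly (radTree L1 m t)
      = ∑ s : Finset (TVert L1 m t),
          if IsIndep (radTree L1 m t) s then (X : Polynomial ℤ) ^ s.card else 0 := by
    rw [indepPoly, Finset.sum_filter]
  rw [hfilter, ← Equiv.sum_comp (quadEquiv L1 m t)
    (fun s => if IsIndep (radTree L1 m t) s then (X : Polynomial ℤ) ^ s.card else 0),
    Fintype.sum_prod_type, Fintype.sum_bool]
  have htrue : (∑ p : Finset (Fin L1) × Finset (Fin m) × (∀ i, Finset (Fin (t i))),
      if IsIndep (radTree L1 m t) (quadEquiv L1 m t (true, p))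
        then (X : Polynomial ℤ) ^ (quadEquiv L1 m t (true, p)).card else 0)
      = X * (X + 1) ^ (∑ i, t i) := by
    have step : ∀ p : Finset (Fin L1) × Finset (Fin m) × (∀ i, Finset (Fin (t i))),
        (if IsIndep (radTree L1 m t) (quadEquiv L1 m t (true, p))
          then (X : Polynomial ℤ) ^ (quadEquiv L1 m t (true, p)).card else 0)
        = if p.1 = ∅ then (if p.2.1 = ∅
            then (X : Polynomial ℤ) ^ (1 + ∑ i, (p.2.2 i).card) else 0) else 0 := by
      rintro ⟨a, c, h⟩
      rw [indep_quad, card_quad]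
      by_cases ha : a = ∅
      · by_cases hc : c = ∅
        · subst ha; subst hc; simp
        · simp [ha, hc]
      · simp [ha]
    rw [Finset.sum_congr rfl fun p _ => step p, Fintype.sum_prod_type,
      Finset.sum_eq_single_of_mem (∅ : Finset (Fin L1)) (mem_univ _)
        (fun a _ ha => by simp [ha]),
      Fintype.sum_prod_type,
      Finset.sum_eq_single_of_mem (∅ : Finset (Fin m)) (mem_univ _)
        (fun c _ hc => by simp [hc])]
    simp only [if_true, ite_true]
    have e1 : ∀ h : (∀ i, Finset (Fin (t i))),
        (X : Polynomial ℤ) ^ (1 + ∑ i, (h i).card) = X * ∏ i, X ^ (h i).card := by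
      intro h; rw [pow_add, pow_one, Finset.prod_pow_eq_pow_sum]
    rw [Finset.sum_congr rfl fun h _ => e1 h, ← Finset.mul_sum]
    congr 1
    rw [← Fintype.piFinset_univ,
      ← Finset.prod_univ_sum (fun i => (univ : Finset (Finset (Fin (t i)))))
        (fun i s => (X : Polynomial ℤ) ^ s.card)]
    calc ∏ i, ∑ s : Finset (Fin (t i)), (X : Polynomial ℤ) ^ s.card
        = ∏ i, ((X : Polynomial ℤ) + 1) ^ (t i) := by
          refine Finset.prod_congr rfl fun i _ => ?_
          rw [sum_pow_card, Fintype.card_fin]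
      _ = ((X : Polynomial ℤ) + 1) ^ (∑ i, t i) := Finset.prod_pow_eq_pow_sum _ _ _
  have hfalse : (∑ p : Finset (Fin L1) × Finset (Fin m) × (∀ i, Finset (Fin (t i))),
      if IsIndep (radTree L1 m t) (quadEquiv L1 m t (false, p))
        then (X : Polynomial ℤ) ^ (quadEquiv L1 m t (false, p)).card else 0)
      = (X + 1) ^ L1 * ∏ i, ((X + 1) ^ t i + X) := by
    have step : ∀ p : Finset (Fin L1) × Finset (Fin m) × (∀ i, Finset (Fin (t i))),
        (if IsIndep (radTree L1 m t) (quadEquiv L1 m t (false, p))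
          then (X : Polynomial ℤ) ^ (quadEquiv L1 m t (false, p)).card else 0)
        = X ^ p.1.card * ∏ i, (if (i ∈ p.2.1 → p.2.2 i = ∅)
            then (X : Polynomial ℤ) ^ ((if i ∈ p.2.1 then 1 else 0) + (p.2.2 i).card)
            else 0) := by
      rintro ⟨a, c, h⟩
      dsimp only
      rw [indep_quad, card_quad,
        prod_ite_all (fun i => i ∈ c → h i = ∅)
          (fun i => (X : Polynomial ℤ) ^ ((if i ∈ c then 1 else 0) + (h i).card))]
      by_cases hch : ∀ i ∈ c, h i = ∅
      · rw [if_pos ⟨fun hb => by simp at hb, hch⟩, if_pos hch,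
          Finset.prod_pow_eq_pow_sum, ← pow_add]
        congr 1
        rw [Finset.sum_add_distrib, Finset.sum_ite_mem, univ_inter, Finset.sum_const,
          smul_eq_mul, mul_one]
        simp [add_assoc, add_comm, add_left_comm]
      · rw [if_neg (by rintro ⟨-, hc⟩; exact hch hc), if_neg hch, mul_zero]
    rw [Finset.sum_congr rfl fun p _ => step p, Fintype.sum_prod_type]
    dsimp only
    have k := Finset.sum_mul_sum (univ : Finset (Finset (Fin L1))) univ (fun a : Finset (Fin L1) => (X : Polynomial ℤ) ^ a.card) (fun p : Finset (Fin m) × (∀ i, Finset (Fin (t i))) => ∏ i, (if (i ∈ p.1 → p.2 i = ∅)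
              then (X : Polynomial ℤ) ^ ((if i ∈ p.1 then 1 else 0) + (p.2 i).card)
              else 0))
    rw [← k]
    have f1 : (∑ a : Finset (Fin L1), (X : Polynomial ℤ) ^ a.card) = (X + 1) ^ L1 := by
      rw [sum_pow_card, Fintype.card_fin]
    rw [f1]
    congr 1
    rw [Fintype.sum_prod_type]
    have inner : ∀ c : Finset (Fin m),
        (∑ h : (∀ i, Finset (Fin (t i))), ∏ i, (if (i ∈ c → h i = ∅)
          then (X : Polynomial ℤ) ^ ((if i ∈ c then 1 else 0) + (h i).card) else 0))
        = ∏ i, (if i ∈ c then (X : Polynomial ℤ) else (X + 1) ^ (t i)) := by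
      intro c
      rw [← Fintype.piFinset_univ,
        ← Finset.prod_univ_sum (fun i => (univ : Finset (Finset (Fin (t i)))))
          (fun i s => if (i ∈ c → s = ∅)
            then (X : Polynomial ℤ) ^ ((if i ∈ c then 1 else 0) + s.card) else 0)]
      refine Finset.prod_congr rfl fun i _ => ?_
      by_cases hic : i ∈ c
      · simp [hic]
      · simp only [hic, if_neg, if_false, zero_add]
        simp only [hic, false_implies, if_true]
        rw [sum_pow_card, Fintype.card_fin]
    rw [Finset.sum_congr rfl fun c _ => inner c]
    have := Finset.prod_add (fun _ : Fin m => (X : Polynomial ℤ))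
      (fun i => ((X : Polynomial ℤ) + 1) ^ (t i)) univ
    rw [powerset_univ] at this
    calc ∑ c : Finset (Fin m), ∏ i, (if i ∈ c then (X : Polynomial ℤ) else (X + 1) ^ (t i))
        = ∑ c : Finset (Fin m), (∏ _i ∈ c, (X : Polynomial ℤ)) * ∏ i ∈ univ \ c,
            ((X : Polynomial ℤ) + 1) ^ (t i) := by
          refine Finset.sum_congr rfl fun c _ => ?_
          rw [Finset.prod_ite, Finset.filter_mem_eq_inter, univ_inter, Finset.filter_not,
            Finset.filter_mem_eq_inter, univ_inter]
      _ = ∏ i, ((X : Polynomial ℤ) + (X + 1) ^ (t i)) := this.symm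
      _ = ∏ i, (((X : Polynomial ℤ) + 1) ^ (t i) + X) := by
          exact Finset.prod_congr rfl fun i _ => add_comm _ _
  rw [htrue, hfalse]

lemma X_add_one_eq : ((X : Polynomial ℤ) + 1) = X - Polynomial.C (-1) := by
  simp

lemma rootMult_factor {K : ℕ} {u : Polynomial ℤ} (hu : u.eval (-1) ≠ 0) :
    (((X : Polynomial ℤ) + 1) ^ K * u).rootMultiplicity (-1) = K := by
  have hu0 : u ≠ 0 := fun h => hu (by simp [h])
  have hX : ((X : Polynomial ℤ) + 1) ≠ 0 := by
    rw [X_add_one_eq]; exact Polynomial.X_sub_C_ne_zero (-1)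
  have hne : ((X : Polynomial ℤ) + 1) ^ K * u ≠ 0 := mul_ne_zero (pow_ne_zero _ hX) hu0
  rw [Polynomial.rootMultiplicity_mul hne, X_add_one_eq,
    Polynomial.rootMultiplicity_X_sub_C_pow,
    Polynomial.rootMultiplicity_eq_zero (by simpa [Polynomial.IsRoot] using hu), add_zero]

lemma prod_factor_eval {ι : Type*} (s : Finset ι) (f e : ι → Polynomial ℤ)
    (hf : ∀ i ∈ s, f i = ((X : Polynomial ℤ) + 1) * e i - 1) :
    ∃ g : Polynomial ℤ, (∏ i ∈ s, f i) = (-1) ^ s.card + ((X : Polynomial ℤ) + 1) * g ∧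
      (-1 : ℤ) ^ s.card * g.eval (-1) = -∑ i ∈ s, (e i).eval (-1) := by
  induction s using Finset.cons_induction_on with
  | empty => exact ⟨0, by simp⟩
  | cons _ _ hj ih =>
    rename_i j s
    obtain ⟨g, hg, hge⟩ := ih fun i hi => hf i (Finset.mem_cons_of_mem hi)
    refine ⟨e j * (-1) ^ s.card + ((X : Polynomial ℤ) + 1) * e j * g - g, ?_, ?_⟩
    · rw [Finset.prod_cons, hg, hf j (Finset.mem_cons_self j s), Finset.card_cons]
      ring
    · rw [Finset.card_cons, Finset.sum_cons]
      simp only [Polynomial.eval_sub, Polynomial.eval_add, Polynomial.eval_mul,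
        Polynomial.eval_pow, Polynomial.eval_neg, Polynomial.eval_one, Polynomial.eval_X]
      have h2 : ((-1 : ℤ) + 1) = 0 := by ring
      rw [pow_succ]
      rcases neg_one_pow_eq_or ℤ s.card with h | h <;>
        · rw [h] at hge ⊢
          simp only [h2]
          linarith [hge]


/-- The multiplicity `M(T)` of `x = -1` in the independence polynomial of a tree `T` of
radius at most 2, in terms of `L1`, `L2 = ∑ t_i`, and `m`. -/
theorem multM_radTree (L1 m : ℕ) (t : Fin m → ℕ) (h1 : 1 ≤ L1 + m) (ht : ∀ i, 1 ≤ t i) :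
    ((∑ i : Fin m, t i) = 0 → multM (radTree L1 m t) = 0)
    ∧ (0 < (∑ i : Fin m, t i) → L1 = 0 → multM (radTree L1 m t) = 0)
    ∧ (0 < L1 → 0 < (∑ i : Fin m, t i) → L1 ≠ (∑ i : Fin m, t i) →
        multM (radTree L1 m t) = min L1 (∑ i : Fin m, t i))
    ∧ (0 < L1 → L1 = (∑ i : Fin m, t i) → Odd m → multM (radTree L1 m t) = L1)
    ∧ (0 < L1 → L1 = (∑ i : Fin m, t i) → Even m → multM (radTree L1 m t) = L1 + 1) := by
  have hprod : (∏ i : Fin m, (((X : Polynomial ℤ) + 1) ^ (t i) + X)).eval (-1) = (-1) ^ m := by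
    rw [Polynomial.eval_prod]
    have hev : ∀ i ∈ univ, ((((X : Polynomial ℤ) + 1) ^ (t i) + X)).eval (-1) = -1 := by
      intro i _
      simp only [Polynomial.eval_add, Polynomial.eval_pow, Polynomial.eval_X,
        Polynomial.eval_one]
      rw [show (-1 + 1 : ℤ) = 0 by ring, zero_pow (by have := ht i; omega)]
      ring
    rw [Finset.prod_congr rfl hev, Finset.prod_const, Finset.card_univ, Fintype.card_fin]
  have heval : (indepPoly (radTree L1 m t)).eval (-1)
      = -(0 : ℤ) ^ (∑ i, t i) + 0 ^ L1 * (-1) ^ m := by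
    rw [indepPoly_radTree]
    simp only [Polynomial.eval_add, Polynomial.eval_mul, Polynomial.eval_pow,
      Polynomial.eval_X, Polynomial.eval_one, hprod]
    rw [show (-1 + 1 : ℤ) = 0 by ring]
    ring
  refine ⟨?_, ?_, ?_, ?_, ?_⟩
  · -- L2 = 0
    intro h0
    have hL1 : 1 ≤ L1 := by
      by_contra hc
      push_neg at hc
      have hm : 1 ≤ m := by omega
      have h2 := Finset.single_le_sum (f := t) (fun i _ => Nat.zero_le _)
        (mem_univ (⟨0, by omega⟩ : Fin m))
      have h3 := ht ⟨0, by omega⟩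
      omega
    have hev : (indepPoly (radTree L1 m t)).eval (-1) = -1 := by
      rw [heval, h0, pow_zero, zero_pow (by omega : L1 ≠ 0)]
      ring
    show (indepPoly (radTree L1 m t)).rootMultiplicity (-1) = 0
    exact Polynomial.rootMultiplicity_eq_zero (by simp [Polynomial.IsRoot, hev])
  · -- L2 > 0, L1 = 0
    intro hpos hL10
    have hev : (indepPoly (radTree L1 m t)).eval (-1) = (-1) ^ m := by
      rw [heval, hL10, pow_zero, zero_pow (by omega : (∑ i, t i) ≠ 0)]
      ring
    show (indepPoly (radTree L1 m t)).rootMultiplicity (-1) = 0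
    refine Polynomial.rootMultiplicity_eq_zero ?_
    simp only [Polynomial.IsRoot, hev]
    exact pow_ne_zero _ (by norm_num)
  · -- L1 ≠ L2, both positive
    intro hL1 hL2 hne
    show (indepPoly (radTree L1 m t)).rootMultiplicity (-1) = _
    rcases lt_or_gt_of_ne hne with hlt | hgt
    · have hfac : indepPoly (radTree L1 m t)
          = ((X : Polynomial ℤ) + 1) ^ L1 *
            (X * (X + 1) ^ ((∑ i, t i) - L1) + ∏ i, ((X + 1) ^ (t i) + X)) := by
        rw [indepPoly_radTree]
        have hp : ((X : Polynomial ℤ) + 1) ^ (∑ i, t i)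
            = (X + 1) ^ L1 * (X + 1) ^ ((∑ i, t i) - L1) := by
          rw [← pow_add, Nat.add_sub_cancel' hlt.le]
        rw [hp]; ring
      rw [hfac, rootMult_factor, min_eq_left hlt.le]
      simp only [Polynomial.eval_add, Polynomial.eval_mul, Polynomial.eval_pow,
        Polynomial.eval_X, Polynomial.eval_one, hprod]
      rw [show (-1 + 1 : ℤ) = 0 by ring, zero_pow (Nat.sub_ne_zero_of_lt hlt)]
      simp only [mul_zero, neg_mul, zero_add]
      exact pow_ne_zero _ (by norm_num)
    · have hfac : indepPoly (radTree L1 m t)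
          = ((X : Polynomial ℤ) + 1) ^ (∑ i, t i) *
            (X + (X + 1) ^ (L1 - (∑ i, t i)) * ∏ i, ((X + 1) ^ (t i) + X)) := by
        rw [indepPoly_radTree]
        have hp : ((X : Polynomial ℤ) + 1) ^ L1
            = (X + 1) ^ (∑ i, t i) * (X + 1) ^ (L1 - (∑ i, t i)) := by
          rw [← pow_add, Nat.add_sub_cancel' hgt.le]
        rw [hp]; ring
      rw [hfac, rootMult_factor, min_eq_right hgt.le]
      simp only [Polynomial.eval_add, Polynomial.eval_mul, Polynomial.eval_pow,
        Polynomial.eval_X, Polynomial.eval_one, hprod]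
      rw [show (-1 + 1 : ℤ) = 0 by ring, zero_pow (Nat.sub_ne_zero_of_lt hgt)]
      norm_num
  · -- L1 = L2, m odd
    intro hL1 hEq hOdd
    show (indepPoly (radTree L1 m t)).rootMultiplicity (-1) = _
    have hfac : indepPoly (radTree L1 m t)
        = ((X : Polynomial ℤ) + 1) ^ L1 * (X + ∏ i, ((X + 1) ^ (t i) + X)) := by
      rw [indepPoly_radTree, ← hEq]; ring
    rw [hfac, rootMult_factor]
    simp only [Polynomial.eval_add, Polynomial.eval_X, hprod, hOdd.neg_one_pow]
    norm_num
  · -- L1 = L2, m even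
    intro hL1 hEq hEven
    show (indepPoly (radTree L1 m t)).rootMultiplicity (-1) = _
    have hm1 : 1 ≤ m := by
      rcases Nat.eq_zero_or_pos m with hm0 | hm0
      · exfalso; subst hm0; simp at hEq; omega
      · exact hm0
    have hm2 : 2 ≤ m := by rcases hEven with ⟨k, hk⟩; omega
    have hf : ∀ i ∈ (univ : Finset (Fin m)),
        (((X : Polynomial ℤ) + 1) ^ (t i) + X)
          = ((X : Polynomial ℤ) + 1) * (((X : Polynomial ℤ) + 1) ^ (t i - 1) + 1) - 1 := by
      intro i _
      have h' : ((X : Polynomial ℤ) + 1) ^ (t i) = (X + 1) * (X + 1) ^ (t i - 1) := by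
        conv_lhs => rw [show t i = (t i - 1) + 1 from (Nat.succ_pred_eq_of_pos (ht i)).symm]
        rw [pow_succ]; ring
      rw [h']; ring
    obtain ⟨g, hg, hge⟩ := prod_factor_eval univ
      (fun i => ((X : Polynomial ℤ) + 1) ^ (t i) + X)
      (fun i => ((X : Polynomial ℤ) + 1) ^ (t i - 1) + 1) hf
    rw [Finset.card_univ, Fintype.card_fin] at hg hge
    have hfac : indepPoly (radTree L1 m t)
        = ((X : Polynomial ℤ) + 1) ^ (L1 + 1) * (1 + g) := by
      rw [indepPoly_radTree, ← hEq, hg, hEven.neg_one_pow]; ring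
    rw [(hEven.neg_one_pow : (-1 : ℤ) ^ m = 1), one_mul] at hge
    have hsum : ∀ i ∈ (univ : Finset (Fin m)),
        (1 : ℤ) ≤ ((((X : Polynomial ℤ) + 1) ^ (t i - 1) + 1)).eval (-1) := by
      intro i _
      simp only [Polynomial.eval_add, Polynomial.eval_pow, Polynomial.eval_X,
        Polynomial.eval_one]
      have h0 : (0 : ℤ) ≤ (-1 + 1 : ℤ) ^ (t i - 1) := by
        rw [show (-1 + 1 : ℤ) = 0 by ring]
        positivity
      linarith
    have hsum2 : (m : ℤ) ≤ ∑ i : Fin m,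
        ((((X : Polynomial ℤ) + 1) ^ (t i - 1) + 1)).eval (-1) := by
      calc (m : ℤ) = ∑ _i : Fin m, (1 : ℤ) := by simp
        _ ≤ _ := Finset.sum_le_sum hsum
    have hu : (1 + g).eval (-1) ≠ 0 := by
      simp only [Polynomial.eval_add, Polynomial.eval_one]
      rw [hge]
      have hm2' : (2 : ℤ) ≤ (m : ℤ) := by exact_mod_cast hm2
      intro hc
      linarith
    rw [hfac]
    exact rootMult_factor hu
end

section
/- Let G be a finite simple graph containing a vertex v of degree k ≥ 2 whose neighbors are v_1,…,v_k, where v_1,…,v_{k−1} each have degree 1, and let G' and G'' be the induced subgraphs of G on V(G) ∖ {v, v_1,…,v_{k−1}} and V(G) ∖ {v, v_1,…,v_k}, respectively. For any finite simple graph H, let c(H) denote the coefficient of u^{M(H)} in the polynomial P_H(u−1) (a nonzero integer). Set r_1 = (k−1) + M(G') and r_2 = M(G''). Then: (a) if r_1 < r_2, then M(G) = r_1 and c(G) = c(G'); (b) if r_2 < r_1, then M(G) = r_2 and c(G) = −c(G''); (c) if r_1 = r_2 = r, then the coefficient of u^r in P_G(u−1) equals c(G') − c(G''); in particular M(G) =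 r if and only if c(G') ≠ c(G''), and M(G) ≥ r + 1 if and only if c(G') = c(G''). -/
attribute [local instance] Classical.propDecidable

/-- `P_G(u - 1)`, the independence polynomial after the substitution `x = u - 1`. -/
noncomputable def indepPolyShift {V : Type*} [Fintype V] (G : SimpleGraph V) : Polynomial ℤ :=
  (indepPoly G).comp (Polynomial.X - 1)

/-- `c(G)`: the coefficient of `u^{M(G)}` in `P_G(u - 1)`. -/
noncomputable def leadC {V : Type*} [Fintype V] (G : SimpleGraph V) : ℤ :=
  (indepPolyShift G).coeff (multM G)

/-- The complement of `{v, v_1, …, v_{k-1}}`; inducing on it gives `G'`. -/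
def delSet' {V : Type*} (k : ℕ) (v : V) (vs : Fin k → V) : Set V :=
  ({v} ∪ {w | ∃ i : Fin k, (i : ℕ) < k - 1 ∧ vs i = w})ᶜ

/-- The complement of `{v, v_1, …, v_k}`; inducing on it gives `G''`. -/
def delSet'' {V : Type*} (k : ℕ) (v : V) (vs : Fin k → V) : Set V :=
  ({v} ∪ Set.range vs)ᶜ


section AuxJK
open Polynomial

lemma ntd_add_of_lt {p q : ℤ[X]} (hp : p ≠ 0) (hq : q ≠ 0)
    (h : p.natTrailingDegree < q.natTrailingDegree) :
    (p + q) ≠ 0 ∧ (p + q).natTrailingDegree = p.natTrailingDegree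
      ∧ (p + q).trailingCoeff = p.trailingCoeff := by
  have hco : (p + q).coeff p.natTrailingDegree = p.trailingCoeff := by
    rw [coeff_add, coeff_eq_zero_of_lt_natTrailingDegree h, add_zero, trailingCoeff]
  have hne : (p + q) ≠ 0 := by
    intro h0
    rw [h0, coeff_zero] at hco
    exact (mt trailingCoeff_eq_zero.mp hp) hco.symm
  have hle : (p + q).natTrailingDegree ≤ p.natTrailingDegree :=
    natTrailingDegree_le_of_ne_zero (by rw [hco]; exact mt trailingCoeff_eq_zero.mp hp)
  have hge : p.natTrailingDegree ≤ (p + q).natTrailingDegree := by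
    apply le_natTrailingDegree hne
    intro m hm
    rw [coeff_add, coeff_eq_zero_of_lt_natTrailingDegree hm,
      coeff_eq_zero_of_lt_natTrailingDegree (hm.trans h), add_zero]
  have heq := le_antisymm hle hge
  exact ⟨hne, heq, by rw [trailingCoeff, heq, hco]⟩

lemma ntd_Xsub1_mul {B : ℤ[X]} (hB : B ≠ 0) :
    ((X - 1 : ℤ[X]) * B) ≠ 0 ∧ ((X - 1 : ℤ[X]) * B).natTrailingDegree = B.natTrailingDegree ∧
      ((X - 1 : ℤ[X]) * B).trailingCoeff = -B.trailingCoeff := by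
  have h1 : (X - 1 : ℤ[X]) ≠ 0 := by simpa using X_sub_C_ne_zero (1 : ℤ)
  have hne : (X - 1 : ℤ[X]) * B ≠ 0 := mul_ne_zero h1 hB
  have hntd1 : (X - 1 : ℤ[X]).natTrailingDegree = 0 := by
    rw [natTrailingDegree_eq_zero]
    right; simp
  have htc1 : (X - 1 : ℤ[X]).trailingCoeff = -1 := by
    rw [trailingCoeff, hntd1]; simp
  refine ⟨hne, ?_, ?_⟩
  · rw [natTrailingDegree_mul h1 hB, hntd1, zero_add]
  · rw [trailingCoeff_mul, htc1, neg_one_mul]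

lemma ntd_Xpow_mul {A : ℤ[X]} (hA : A ≠ 0) (m : ℕ) :
    ((X : ℤ[X]) ^ m * A) ≠ 0 ∧ ((X : ℤ[X]) ^ m * A).natTrailingDegree = m + A.natTrailingDegree ∧
      ((X : ℤ[X]) ^ m * A).trailingCoeff = A.trailingCoeff := by
  have hX : (X : ℤ[X]) ^ m ≠ 0 := pow_ne_zero m X_ne_zero
  refine ⟨mul_ne_zero hX hA, ?_, ?_⟩
  · rw [natTrailingDegree_mul hX hA, natTrailingDegree_X_pow]
  · have : ((X : ℤ[X]) ^ m).trailingCoeff = 1 := by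
      rw [trailingCoeff, natTrailingDegree_X_pow, coeff_X_pow, if_pos rfl]
    rw [trailingCoeff_mul, this, one_mul]

variable {V : Type*} [Fintype V] (G : SimpleGraph V)


lemma indepPoly_coeff_zero : (indepPoly G).coeff 0 = 1 := by
  rw [indepPoly, finset_sum_coeff]
  rw [Finset.sum_eq_single (∅ : Finset V)]
  · simp
  · intro s hs hne
    rw [coeff_X_pow, if_neg]
    intro h
    exact hne (Finset.card_eq_zero.mp h.symm)
  · intro h
    exact absurd (Finset.mem_filter.2 ⟨Finset.mem_univ _, fun v hv => absurd hv (by simp)⟩) h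

lemma indepPolyShift_ne_zero : indepPolyShift G ≠ 0 := by
  intro h
  have : (indepPolyShift G).eval 1 = 0 := by rw [h]; simp
  rw [indepPolyShift, eval_comp] at this
  simp at this
  have h0 : (indepPoly G).eval 0 = 1 := by
    rw [← indepPoly_coeff_zero G, ← coeff_zero_eq_eval_zero]
  omega

lemma multM_eq_ntd : multM G = (indepPolyShift G).natTrailingDegree := by
  rw [multM, Polynomial.rootMultiplicity_eq_natTrailingDegree]
  congr 1
  rw [indepPolyShift]
  congr 1
  simp [sub_eq_add_neg]

lemma leadC_eq_tc : leadC G = (indepPolyShift G).trailingCoeff := by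
  rw [leadC, multM_eq_ntd, trailingCoeff]

lemma indepPoly_induce (D : Set V) :
    indepPoly (G.induce D) =
      ∑ s ∈ Finset.univ.filter (fun s : Finset V => ↑s ⊆ D ∧ IsIndep G s),
        (Polynomial.X : ℤ[X]) ^ s.card := by
  rw [indepPoly]
  refine Finset.sum_nbij' (fun s => s.map (Function.Embedding.subtype _))
    (fun s => s.subtype (· ∈ D)) ?_ ?_ ?_ ?_ ?_
  · intro s hs
    rw [Finset.mem_filter] at hs ⊢
    refine ⟨Finset.mem_univ _, ?_, ?_⟩
    · intro x hx
      simp only [Finset.coe_map, Set.mem_image, Finset.mem_coe] at hx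
      obtain ⟨a, -, rfl⟩ := hx
      exact a.2
    · intro x hx y hy hadj
      simp only [Finset.mem_map, Function.Embedding.coe_subtype] at hx hy
      obtain ⟨a, ha, rfl⟩ := hx
      obtain ⟨b, hb, rfl⟩ := hy
      exact hs.2 a ha b hb hadj
  · intro t ht
    rw [Finset.mem_filter] at ht ⊢
    refine ⟨Finset.mem_univ _, ?_⟩
    intro a ha b hb hadj
    rw [Finset.mem_subtype] at ha hb
    exact ht.2.2 a ha b hb hadj
  · intro s hs
    ext a
    simp [Finset.mem_subtype]
  · intro t ht
    rw [Finset.mem_filter] at ht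
    ext x
    simp only [Finset.mem_map, Finset.mem_subtype, Function.Embedding.coe_subtype]
    constructor
    · rintro ⟨a, ha, rfl⟩; exact ha
    · intro hx; exact ⟨⟨x, ht.2.1 hx⟩, hx, rfl⟩
  · intro s hs
    rw [Finset.card_map]

lemma key_identity (k : ℕ) (hk : 2 ≤ k) (v : V) (vs : Fin k → V)
    (hinj : Function.Injective vs)
    (hnbr : ∀ w, G.Adj v w ↔ ∃ i, vs i = w)
    (hleaf : ∀ i : Fin k, (i : ℕ) < k - 1 → ∀ w, G.Adj (vs i) w ↔ w = v) :
    indepPoly G = (Polynomial.X + 1) ^ (k - 1) * indepPoly (G.induce (delSet' k v vs))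
      + Polynomial.X * indepPoly (G.induce (delSet'' k v vs)) := by
  classical
  set L : Finset V := (Finset.univ.filter (fun i : Fin k => (i : ℕ) < k - 1)).image vs with hL
  have hadj : ∀ i, G.Adj v (vs i) := fun i => (hnbr (vs i)).2 ⟨i, rfl⟩
  have hvs_ne : ∀ i, vs i ≠ v := fun i h => G.irrefl (h ▸ hadj i)
  have hmemL : ∀ w, w ∈ L ↔ ∃ i : Fin k, (i : ℕ) < k - 1 ∧ vs i = w := by
    intro w
    simp [hL, Finset.mem_image, Finset.mem_filter]
  have hmemD' : ∀ w, w ∈ delSet' k v vs ↔ w ≠ v ∧ w ∉ L := by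
    intro w
    simp only [delSet', Set.mem_compl_iff, Set.mem_union, Set.mem_singleton_iff,
      Set.mem_setOf_eq, hmemL, not_or]
  have hmemD'' : ∀ w, w ∈ delSet'' k v vs ↔ w ≠ v ∧ ∀ i, vs i ≠ w := by
    intro w
    simp only [delSet'', Set.mem_compl_iff, Set.mem_union, Set.mem_singleton_iff,
      Set.mem_range, not_or, not_exists]
  have hLcard : L.card = k - 1 := by
    rw [hL, Finset.card_image_of_injective _ hinj]
    have : (Finset.univ.filter (fun i : Fin k => (i : ℕ) < k - 1))
        = (Finset.univ : Finset (Fin (k - 1))).image (Fin.castLE (by omega)) := by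
      ext i
      simp only [Finset.mem_filter, Finset.mem_univ, true_and, Finset.mem_image]
      constructor
      · intro h; exact ⟨⟨(i : ℕ), h⟩, by simp [Fin.ext_iff]⟩
      · rintro ⟨j, -, rfl⟩; exact j.2
    rw [this, Finset.card_image_of_injective _ (Fin.castLE_injective _), Finset.card_univ,
      Fintype.card_fin]
  rw [indepPoly, ← Finset.sum_filter_add_sum_filter_not
    (Finset.univ.filter fun s : Finset V => IsIndep G s) (fun s => v ∈ s), add_comm]
  congr 1
  -- Part without v : (X+1)^(k-1) * P'
  · have hpow : ((Polynomial.X : ℤ[X]) + 1) ^ (k - 1)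
        = ∑ a ∈ L.powerset, (Polynomial.X : ℤ[X]) ^ a.card := by
      have := Finset.prod_add (fun _ : V => (Polynomial.X : ℤ[X])) (fun _ => 1) L
      simp only [Finset.prod_const, Finset.prod_const_one, one_pow, mul_one] at this
      rw [← hLcard]; exact this
    rw [indepPoly_induce, hpow, Finset.sum_mul_sum, ← Finset.sum_product']
    refine Finset.sum_nbij' (fun s => (s ∩ L, s \ L)) (fun p => p.1 ∪ p.2) ?_ ?_ ?_ ?_ ?_
    · -- forward maps into product set
      intro s hs
      simp only [Finset.mem_filter, Finset.mem_univ, true_and] at hs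
      obtain ⟨hsind, hvs⟩ := hs
      simp only [Finset.mem_product, Finset.mem_powerset, Finset.mem_filter, Finset.mem_univ,
        true_and]
      refine ⟨Finset.inter_subset_right, ?_, ?_⟩
      · intro x hx
        simp only [Finset.coe_sdiff, Set.mem_diff, Finset.mem_coe] at hx
        rw [hmemD']
        exact ⟨fun h => hvs (h ▸ hx.1), hx.2⟩
      · intro a ha b hb
        exact hsind a (Finset.mem_sdiff.1 ha).1 b (Finset.mem_sdiff.1 hb).1
    · -- backward maps into filter set
      intro p hp
      simp only [Finset.mem_product, Finset.mem_powerset, Finset.mem_filter, Finset.mem_univ,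
        true_and] at hp
      obtain ⟨ha, ht, htind⟩ := hp
      have hvnot : v ∉ p.1 ∪ p.2 := by
        intro hv
        rcases Finset.mem_union.1 hv with h | h
        · obtain ⟨i, -, hi⟩ := (hmemL v).1 (ha h)
          exact hvs_ne i hi
        · exact (((hmemD' v).1 (ht h)).1) rfl
      simp only [Finset.mem_filter, Finset.mem_univ, true_and]
      refine ⟨?_, hvnot⟩
      intro x hx y hy hxy
      rcases Finset.mem_union.1 hx with h | h
      · obtain ⟨i, hik, rfl⟩ := (hmemL x).1 (ha h)
        rw [hleaf i hik y] at hxy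
        rw [hxy] at hy
        exact hvnot hy
      · rcases Finset.mem_union.1 hy with h' | h'
        · obtain ⟨i, hik, rfl⟩ := (hmemL y).1 (ha h')
          have hxv := (hleaf i hik x).1 (G.adj_symm hxy)
          rw [hxv] at hx
          exact hvnot hx
        · exact htind x h y h' hxy
    · -- left inverse
      intro s hs
      ext x
      simp only [Finset.mem_union, Finset.mem_inter, Finset.mem_sdiff]
      tauto
    · -- right inverse
      intro p hp
      simp only [Finset.mem_product, Finset.mem_powerset, Finset.mem_filter, Finset.mem_univ,
        true_and] at hp
      obtain ⟨ha, ht, -⟩ := hp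
      have hdisj : Disjoint p.2 L := by
        rw [Finset.disjoint_left]
        intro x hx
        exact ((hmemD' x).1 (ht hx)).2
      have h1 : (p.1 ∪ p.2) ∩ L = p.1 := by
        rw [Finset.union_inter_distrib_right, Finset.inter_eq_left.2 ha,
          (Finset.disjoint_iff_inter_eq_empty.1 hdisj), Finset.union_empty]
      have h2 : (p.1 ∪ p.2) \ L = p.2 := by
        rw [Finset.union_sdiff_distrib, Finset.sdiff_eq_empty_iff_subset.2 ha,
          Finset.empty_union, _root_.sdiff_eq_self_iff_disjoint.2 hdisj.symm]
      exact Prod.ext h1 h2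
    · -- values
      intro s hs
      simp only [← pow_add, Finset.card_inter_add_card_sdiff]
  -- Part with v : X * P''
  · rw [indepPoly_induce, Finset.mul_sum]
    refine Finset.sum_nbij' (fun s => s.erase v) (fun t => insert v t) ?_ ?_ ?_ ?_ ?_
    · intro s hs
      simp only [Finset.mem_filter, Finset.mem_univ, true_and] at hs
      obtain ⟨hsind, hvs⟩ := hs
      simp only [Finset.mem_filter, Finset.mem_univ, true_and]
      refine ⟨?_, ?_⟩
      · intro x hx
        simp only [Finset.coe_erase, Set.mem_diff, Finset.mem_coe, Set.mem_singleton_iff] at hx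
        rw [hmemD'']
        refine ⟨hx.2, ?_⟩
        intro i hi
        exact hsind v hvs x (hi ▸ hx.1) (hi ▸ hadj i)
      · intro a ha b hb
        exact hsind a (Finset.mem_of_mem_erase ha) b (Finset.mem_of_mem_erase hb)
    · intro t ht
      simp only [Finset.mem_filter, Finset.mem_univ, true_and] at ht
      obtain ⟨htsub, htind⟩ := ht
      simp only [Finset.mem_filter, Finset.mem_univ, true_and]
      refine ⟨?_, Finset.mem_insert_self _ _⟩
      intro x hx y hy hxy
      have hnv : ∀ z ∈ t, ¬ G.Adj v z := by
        intro z hz hadjz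
        obtain ⟨i, hi⟩ := (hnbr z).1 hadjz
        exact ((hmemD'' z).1 (htsub hz)).2 i hi
      rcases Finset.mem_insert.1 hx with hxv | hx'
      · rcases Finset.mem_insert.1 hy with hyv | hy'
        · exact hxy.ne (hxv.trans hyv.symm)
        · exact hnv y hy' (by rwa [hxv] at hxy)
      · rcases Finset.mem_insert.1 hy with hyv | hy'
        · exact hnv x hx' (by rw [hyv] at hxy; exact G.adj_symm hxy)
        · exact htind x hx' y hy' hxy
    · intro s hs
      simp only [Finset.mem_filter] at hs
      exact Finset.insert_erase hs.2
    · intro t ht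
      simp only [Finset.mem_filter, Finset.mem_univ, true_and] at ht
      refine Finset.erase_insert ?_
      intro hv
      exact ((hmemD'' v).1 (ht.1 hv)).1 rfl
    · intro s hs
      simp only [Finset.mem_filter] at hs
      rw [← pow_succ', Finset.card_erase_of_mem hs.2,
        Nat.sub_add_cancel (Finset.card_pos.2 ⟨v, hs.2⟩)]

end AuxJK

open Polynomial in
/-- Jacques–Katzman type recursion for `M(G)` on forests: with `G'`, `G''` induced on
`delSet'`, `delSet''`, `r₁ = (k-1) + M(G')` and `r₂ = M(G'')`, we have
(a) if `r₁ < r₂` then `M(G) = r₁` and `c(G) = c(G')`;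
(b) if `r₂ < r₁` then `M(G) = r₂` and `c(G) = -c(G'')`;
(c) if `r₁ = r₂ = r` then the coefficient of `u^r` in `P_G(u-1)` is `c(G') - c(G'')`, and
    `M(G) = r ↔ c(G') ≠ c(G'')`, while `M(G) ≥ r + 1 ↔ c(G') = c(G'')`. -/
theorem multM_leaf_recursion {V : Type*} [Fintype V] (G : SimpleGraph V)
    (k : ℕ) (hk : 2 ≤ k) (v : V) (vs : Fin k → V) (hinj : Function.Injective vs)
    (hnbr : ∀ w, G.Adj v w ↔ ∃ i, vs i = w)
    (hleaf : ∀ i : Fin k, (i : ℕ) < k - 1 → ∀ w, G.Adj (vs i) w ↔ w = v) :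
    ((k - 1) + multM (G.induce (delSet' k v vs)) < multM (G.induce (delSet'' k v vs)) →
        multM G = (k - 1) + multM (G.induce (delSet' k v vs))
          ∧ leadC G = leadC (G.induce (delSet' k v vs)))
    ∧ (multM (G.induce (delSet'' k v vs)) < (k - 1) + multM (G.induce (delSet' k v vs)) →
        multM G = multM (G.induce (delSet'' k v vs))
          ∧ leadC G = - leadC (G.induce (delSet'' k v vs)))
    ∧ (∀ r : ℕ,
        (k - 1) + multM (G.induce (delSet' k v vs)) = r →
        multM (G.induce (delSet'' k v vs)) = r →
          (indepPolyShift G).coeff r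
              = leadC (G.induce (delSet' k v vs)) - leadC (G.induce (delSet'' k v vs))
          ∧ (multM G = r ↔
              leadC (G.induce (delSet' k v vs)) ≠ leadC (G.induce (delSet'' k v vs)))
          ∧ (r + 1 ≤ multM G ↔
              leadC (G.induce (delSet' k v vs)) = leadC (G.induce (delSet'' k v vs)))) := by
  have hkey := key_identity G k hk v vs hinj hnbr hleaf
  set A := indepPolyShift (G.induce (delSet' k v vs)) with hAdef
  set B := indepPolyShift (G.induce (delSet'' k v vs)) with hBdef
  have hA : A ≠ 0 := indepPolyShift_ne_zero _
  have hB : B ≠ 0 := indepPolyShift_ne_zero _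
  have hshift : indepPolyShift G = (X : ℤ[X]) ^ (k - 1) * A + (X - 1) * B := by
    rw [indepPolyShift, hkey, add_comp, mul_comp, mul_comp, pow_comp, add_comp, X_comp,
      one_comp, sub_add_cancel, hAdef, hBdef, indepPolyShift, indepPolyShift]
  obtain ⟨hP1ne, hP1ntd, hP1tc⟩ := ntd_Xpow_mul hA (k - 1)
  obtain ⟨hP2ne, hP2ntd, hP2tc⟩ := ntd_Xsub1_mul hB
  have hmA : multM (G.induce (delSet' k v vs)) = A.natTrailingDegree := multM_eq_ntd _
  have hmB : multM (G.induce (delSet'' k v vs)) = B.natTrailingDegree := multM_eq_ntd _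
  have hcA : leadC (G.induce (delSet' k v vs)) = A.trailingCoeff := leadC_eq_tc _
  have hcB : leadC (G.induce (delSet'' k v vs)) = B.trailingCoeff := leadC_eq_tc _
  refine ⟨?_, ?_, ?_⟩
  · intro h
    rw [hmA, hmB] at h
    obtain ⟨hne, hntd, htc⟩ := ntd_add_of_lt hP1ne hP2ne (by rw [hP1ntd, hP2ntd]; exact h)
    constructor
    · rw [multM_eq_ntd, hshift, hntd, hP1ntd, hmA]
    · rw [leadC_eq_tc, hshift, htc, hP1tc, hcA]
  · intro h
    rw [hmA, hmB] at h
    have hcomm : indepPolyShift G = (X - 1) * B + (X : ℤ[X]) ^ (k - 1) * A := by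
      rw [hshift, add_comm]
    obtain ⟨hne, hntd, htc⟩ := ntd_add_of_lt hP2ne hP1ne (by rw [hP1ntd, hP2ntd]; exact h)
    constructor
    · rw [multM_eq_ntd, hcomm, hntd, hP2ntd, hmB]
    · rw [leadC_eq_tc, hcomm, htc, hP2tc, hcB]
  · intro r h1 h2
    rw [hmA] at h1
    rw [hmB] at h2
    have hr1 : ((X : ℤ[X]) ^ (k - 1) * A).natTrailingDegree = r := by rw [hP1ntd]; exact h1
    have hr2 : ((X - 1 : ℤ[X]) * B).natTrailingDegree = r := by rw [hP2ntd]; exact h2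
    have hcoeff : (indepPolyShift G).coeff r
        = leadC (G.induce (delSet' k v vs)) - leadC (G.induce (delSet'' k v vs)) := by
      have e1 : ((X : ℤ[X]) ^ (k - 1) * A).coeff r = A.trailingCoeff := by
        rw [← hr1, ← hP1tc]; rfl
      have e2 : ((X - 1 : ℤ[X]) * B).coeff r = -B.trailingCoeff := by
        rw [← hr2, ← hP2tc]; rfl
      rw [hshift, coeff_add, e1, e2, hcA, hcB, sub_eq_add_neg]
    have hlow : ∀ m < r, (indepPolyShift G).coeff m = 0 := by
      intro m hm
      rw [hshift, coeff_add, coeff_eq_zero_of_lt_natTrailingDegree (hr1 ▸ hm),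
        coeff_eq_zero_of_lt_natTrailingDegree (hr2 ▸ hm), add_zero]
    have hne0 : indepPolyShift G ≠ 0 := indepPolyShift_ne_zero _
    have hge : r ≤ (indepPolyShift G).natTrailingDegree := le_natTrailingDegree hne0 hlow
    have hM : multM G = (indepPolyShift G).natTrailingDegree := multM_eq_ntd _
    refine ⟨hcoeff, ?_, ?_⟩
    · constructor
      · intro hMr hcc
        have : (indepPolyShift G).coeff r = 0 := by rw [hcoeff, hcc, sub_self]
        rw [← hMr, hM] at this
        exact (mt trailingCoeff_eq_zero.mp hne0) this
      · intro hcc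
        have hcne : (indepPolyShift G).coeff r ≠ 0 := by
          rw [hcoeff]
          exact sub_ne_zero.2 hcc
        have hle : (indepPolyShift G).natTrailingDegree ≤ r :=
          natTrailingDegree_le_of_ne_zero hcne
        rw [hM]
        omega
    · constructor
      · intro hle
        have : (indepPolyShift G).coeff r = 0 :=
          coeff_eq_zero_of_lt_natTrailingDegree (by rw [← hM]; omega)
        rw [hcoeff] at this
        exact sub_eq_zero.1 this
      · intro hcc
        have hc0 : (indepPolyShift G).coeff r = 0 := by rw [hcoeff, hcc, sub_self]
        have hall : ∀ m < r + 1, (indepPolyShift G).coeff m = 0 := by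
          intro m hm
          rcases Nat.lt_succ_iff_lt_or_eq.1 hm with h | rfl
          · exact hlow m h
          · exact hc0
        rw [hM]
        exact le_natTrailingDegree hne0 hall
end
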